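/- arXiv:1307.3816 — 5 statements merged into one kernel-verified Lean document; each statement's English description precedes it below -/
import Mathlib

section
/- If a is Drazin invertible with Drazin inverse a^D, b is any element, λ is a nonzero scalar, and ab = λba, then a^D·b = λ⁻¹·b·a^D. -/
/-- `x` is a Drazin inverse of `a`. -/
def IsDrazinInverse {A : Type*} [Ring A] (a x : A) : Prop :=
  x * a * x = x ∧ a * x = x * a ∧ ∃ k : ℕ, a ^ (k + 1) * x = a ^ k

theorem stmt2 {F A : Type*} [Field F] [Ring A] [Algebra F A]
    (a aD b : A) (haD : IsDrazinInverse a aD)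
    (l : F) (hl : l ≠ 0) (h : a * b = l • (b * a)) :
    aD * b = l⁻¹ • (b * aD) := by
  obtain ⟨h1, h2, k, h3⟩ := haD
  have hc : Commute a aD := h2
  -- powers of a commute with b up to scalar
  have hpow : ∀ n : ℕ, a ^ n * b = l ^ n • (b * a ^ n) := by
    intro n
    induction n with
    | zero => simp
    | succ n ih =>
      calc a ^ (n + 1) * b = a * (a ^ n * b) := by rw [pow_succ']; rw [mul_assoc]
        _ = l ^ n • (a * b * a ^ n) := by rw [ih, mul_smul_comm, mul_assoc]
        _ = l ^ n • ((l • (b * a)) * a ^ n) := by rw [h]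
        _ = (l ^ n * l) • (b * (a * a ^ n)) := by
              rw [smul_mul_assoc, smul_smul, mul_assoc]
        _ = l ^ (n + 1) • (b * a ^ (n + 1)) := by rw [← pow_succ, ← pow_succ']
  have hid : IsIdempotentElem (aD * a) := by
    show aD * a * (aD * a) = aD * a
    rw [← mul_assoc, h1]
  have hid' : IsIdempotentElem (a * aD) := by
    show a * aD * (a * aD) = a * aD
    rw [h2, ← mul_assoc, h1]
  have hADA : aD ^ (k + 1) * a ^ (k + 1) = aD * a := by
    rw [← hc.symm.mul_pow, hid.pow_succ_eq]
  have hAAD : a ^ (k + 1) * aD ^ (k + 1) = a * aD := by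
    rw [← hc.mul_pow, hid'.pow_succ_eq]
  -- aD = aD^(k+1) * a^k
  have hL : aD ^ (k + 1) * a ^ k = aD := by
    rw [← h3, ← mul_assoc, hADA, h1]
  -- aD = a^k * aD^(k+1)
  have hR : a ^ k * aD ^ (k + 1) = aD := by
    have hk : a ^ k = aD * a ^ (k + 1) := by
      rw [(hc.symm.pow_right (k + 1)).eq, h3]
    rw [hk, mul_assoc, hAAD, ← mul_assoc, h1]
  have hs : l ^ k * (l ^ (k + 1))⁻¹ = l⁻¹ := by
    rw [pow_succ, mul_inv, ← mul_assoc, mul_inv_cancel₀ (pow_ne_zero _ hl), one_mul]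
  have hbpow : b * a ^ (k + 1) = (l ^ (k + 1))⁻¹ • (a ^ (k + 1) * b) := by
    rw [hpow (k + 1), smul_smul, inv_mul_cancel₀ (pow_ne_zero _ hl), one_smul]
  -- step A : aD * b = l⁻¹ • (a * aD * (b * aD))
  have stepA : aD * b = l⁻¹ • (a * aD * (b * aD)) := by
    calc aD * b = aD ^ (k + 1) * a ^ k * b := by rw [hL]
      _ = aD ^ (k + 1) * (a ^ k * b) := by rw [mul_assoc]
      _ = l ^ k • (aD ^ (k + 1) * (b * a ^ k)) := by rw [hpow k, mul_smul_comm]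
      _ = l ^ k • (aD ^ (k + 1) * (b * (a ^ (k + 1) * aD))) := by rw [h3]
      _ = l ^ k • (aD ^ (k + 1) * ((b * a ^ (k + 1)) * aD)) := by rw [mul_assoc b]
      _ = (l ^ k * (l ^ (k + 1))⁻¹) • (aD ^ (k + 1) * (a ^ (k + 1) * b * aD)) := by
            rw [hbpow, smul_mul_assoc, mul_smul_comm, smul_smul]
      _ = l⁻¹ • (aD ^ (k + 1) * a ^ (k + 1) * (b * aD)) := by
            rw [hs]; congr 1; noncomm_ring
      _ = l⁻¹ • (aD * a * (b * aD)) := by rw [hADA]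
      _ = l⁻¹ • (a * aD * (b * aD)) := by rw [← h2]
  -- step B : a * aD * (b * aD) = b * aD
  have hbk : b * a ^ k = (l ^ k)⁻¹ • (a ^ k * b) := by
    rw [hpow k, smul_smul, inv_mul_cancel₀ (pow_ne_zero _ hl), one_smul]
  have stepB : a * aD * (b * aD) = b * aD := by
    have e1 : b * aD = (l ^ k)⁻¹ • (a ^ k * b * aD ^ (k + 1)) := by
      conv_lhs => rw [← hR]
      rw [← mul_assoc, hbk, smul_mul_assoc]
    have e2 : a * aD * a ^ k = a ^ k := by
      have : a * aD * a ^ k = a ^ (k + 1) * aD := by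
        rw [mul_assoc, (hc.symm.pow_right k).eq, ← mul_assoc, ← pow_succ']
      rw [this, h3]
    calc a * aD * (b * aD)
        = (l ^ k)⁻¹ • (a * aD * a ^ k * b * aD ^ (k + 1)) := by
          rw [e1, mul_smul_comm]; congr 1; noncomm_ring
      _ = (l ^ k)⁻¹ • (a ^ k * b * aD ^ (k + 1)) := by rw [e2]
      _ = b * aD := by rw [← e1]
  rw [stepA, stepB]
end

section
/- If a and b are Drazin invertible elements of an algebra over a field with ab = λba for some nonzero scalar λ, then ab is Drazin invertible with (ab)^D = b^D·a^D = λ⁻¹·a^D·b^D. -/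
section Aux
variable {F A : Type*} [Field F] [Ring A] [Algebra F A]

lemma aux_pow_swap (a b : A) (l : F) (h : a * b = l • (b * a)) (n : ℕ) :
    a ^ n * b = l ^ n • (b * a ^ n) := by
  induction n with
  | zero => simp
  | succ n ih =>
    calc a ^ (n + 1) * b = a * (a ^ n * b) := by rw [pow_succ', mul_assoc]
    _ = l ^ n • (a * b * a ^ n) := by rw [ih, mul_smul_comm, mul_assoc]
    _ = (l * l ^ n) • (b * (a ^ n * a)) := by
        rw [h, smul_mul_assoc, smul_smul, mul_comm (l ^ n) l, mul_assoc,
          (Commute.refl a).pow_left n |>.eq]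
    _ = l ^ (n + 1) • (b * a ^ (n + 1)) := by rw [← pow_succ', ← pow_succ]

lemma aux_drazin_pow (a aD : A) (h1 : aD * a * aD = aD) (h2 : a * aD = aD * a) (n : ℕ) :
    aD ^ (n + 1) * a ^ n = aD := by
  induction n with
  | zero => simp
  | succ n ih =>
    calc aD ^ (n + 2) * a ^ (n + 1) = aD * (aD ^ (n + 1) * a ^ n) * a := by
          rw [pow_succ' aD, pow_succ a, mul_assoc, mul_assoc, mul_assoc]
    _ = aD * aD * a := by rw [ih]
    _ = aD := by rw [mul_assoc, ← h2, ← mul_assoc, h1]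

lemma aux_drazin_swap (a aD b : A) (haD : IsDrazinInverse a aD) (l : F) (hl : l ≠ 0)
    (h : a * b = l • (b * a)) : aD * b = l⁻¹ • (b * aD) := by
  obtain ⟨h1, h2, k, h3⟩ := haD
  have hca : Commute a aD := h2
  have hF1 : aD ^ (k + 1) * a ^ k = aD := aux_drazin_pow a aD h1 h2 k
  have hF2 : a ^ k * aD ^ (k + 1) = aD := by
    rw [(hca.pow_pow k (k + 1)).eq]; exact hF1
  have hba : b * a = l⁻¹ • (a * b) := by rw [h, inv_smul_smul₀ hl]
  have hpow : b * a ^ k = (l ^ k)⁻¹ • (a ^ k * b) := by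
    rw [aux_pow_swap a b l h k, inv_smul_smul₀ (pow_ne_zero _ hl)]
  have e0 : aD * b = aD ^ (k + 1) * (a ^ k * b) := by rw [← mul_assoc, hF1]
  have e0' : b * aD = b * a ^ k * aD ^ (k + 1) := by rw [mul_assoc, hF2]
  have eq1 : aD * b * (a * aD) = aD * b := by
    calc aD * b * (a * aD) = aD ^ (k + 1) * (a ^ k * b) * (a * aD) := by rw [e0]
    _ = l ^ k • (aD ^ (k + 1) * (b * a ^ k) * (a * aD)) := by
        rw [aux_pow_swap a b l h k, mul_smul_comm, smul_mul_assoc]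
    _ = l ^ k • (aD ^ (k + 1) * (b * (a ^ (k + 1) * aD))) := by
        rw [mul_assoc (aD ^ (k + 1)), mul_assoc b, ← mul_assoc (a ^ k) a, ← pow_succ]
    _ = l ^ k • (aD ^ (k + 1) * (b * a ^ k)) := by rw [h3]
    _ = aD ^ (k + 1) * (a ^ k * b) := by rw [aux_pow_swap a b l h k, mul_smul_comm]
    _ = aD * b := e0.symm
  have key : a * aD * a ^ k = a ^ k := by
    rw [mul_assoc, (hca.symm.pow_right k).eq, ← mul_assoc, ← pow_succ', h3]
  have eq2 : a * aD * (b * aD) = b * aD := by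
    calc a * aD * (b * aD) = a * aD * (b * a ^ k * aD ^ (k + 1)) := by rw [e0']
    _ = (l ^ k)⁻¹ • (a * aD * (a ^ k * b * aD ^ (k + 1))) := by
        rw [hpow, smul_mul_assoc, mul_smul_comm]
    _ = (l ^ k)⁻¹ • (a ^ k * (b * aD ^ (k + 1))) := by
        rw [mul_assoc (a ^ k) b, ← mul_assoc (a * aD), key]
    _ = b * a ^ k * aD ^ (k + 1) := by rw [hpow, smul_mul_assoc, mul_assoc]
    _ = b * aD := e0'.symm
  calc aD * b = aD * b * (a * aD) := eq1.symm
  _ = aD * (b * a) * aD := by rw [← mul_assoc, mul_assoc aD b a]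
  _ = l⁻¹ • (aD * (a * b) * aD) := by rw [hba, mul_smul_comm, smul_mul_assoc]
  _ = l⁻¹ • (a * aD * (b * aD)) := by
      rw [← mul_assoc aD a b, ← h2, mul_assoc (a * aD) b aD]
  _ = l⁻¹ • (b * aD) := by rw [eq2]

end Aux

section Aux2
variable {F A : Type*} [Field F] [Ring A] [Algebra F A]

lemma aux_prod_pow (a b : A) (l : F) (hl : l ≠ 0)
    (hba : b * a = l⁻¹ • (a * b)) (n : ℕ) :
    ∃ μ : F, μ ≠ 0 ∧ (a * b) ^ n = μ • (a ^ n * b ^ n) := by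
  induction n with
  | zero => exact ⟨1, one_ne_zero, by simp⟩
  | succ n ih =>
    obtain ⟨μ, hμ, hμeq⟩ := ih
    have hswap : b ^ n * a = l⁻¹ ^ n • (a * b ^ n) := aux_pow_swap b a l⁻¹ hba n
    refine ⟨μ * l⁻¹ ^ n, mul_ne_zero hμ (pow_ne_zero _ (inv_ne_zero hl)), ?_⟩
    calc (a * b) ^ (n + 1) = (a * b) ^ n * (a * b) := pow_succ _ _
    _ = μ • (a ^ n * b ^ n * (a * b)) := by rw [hμeq, smul_mul_assoc]
    _ = μ • (a ^ n * (b ^ n * a) * b) := by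
        rw [mul_assoc (a ^ n) (b ^ n) (a * b), ← mul_assoc (b ^ n) a b,
          ← mul_assoc (a ^ n)]
    _ = (μ * l⁻¹ ^ n) • (a ^ n * (a * b ^ n) * b) := by
        rw [hswap, mul_smul_comm, smul_mul_assoc, smul_smul]
    _ = (μ * l⁻¹ ^ n) • (a ^ (n + 1) * b ^ (n + 1)) := by
        rw [← mul_assoc (a ^ n) a (b ^ n), ← pow_succ, mul_assoc, ← pow_succ]

lemma aux_nil (a aD : A) (k : ℕ) (h3 : a ^ (k + 1) * aD = a ^ k) (j : ℕ) :
    a ^ (k + j + 1) * aD = a ^ (k + j) := by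
  have e : a ^ (k + j + 1) = a ^ j * a ^ (k + 1) := by
    rw [← pow_add]; congr 1; omega
  rw [e, mul_assoc, h3, ← pow_add]; congr 1; omega

end Aux2

theorem stmt3 {F A : Type*} [Field F] [Ring A] [Algebra F A]
    (a aD b bD : A) (haD : IsDrazinInverse a aD) (hbD : IsDrazinInverse b bD)
    (l : F) (hl : l ≠ 0) (h : a * b = l • (b * a)) :
    IsDrazinInverse (a * b) (bD * aD) ∧ bD * aD = l⁻¹ • (aD * bD) := by
  have hba : b * a = l⁻¹ • (a * b) := by rw [h, inv_smul_smul₀ hl]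
  have s1 : aD * b = l⁻¹ • (b * aD) := aux_drazin_swap a aD b haD l hl h
  have s2 : bD * a = l • (a * bD) := by
    have := aux_drazin_swap b bD a hbD l⁻¹ (inv_ne_zero hl) hba
    rwa [inv_inv] at this
  have s3 : a * bD = l⁻¹ • (bD * a) := by rw [s2, inv_smul_smul₀ hl]
  have s4 : aD * bD = l • (bD * aD) := by
    have := aux_drazin_swap a aD bD haD l⁻¹ (inv_ne_zero hl) s3
    rwa [inv_inv] at this
  have second : bD * aD = l⁻¹ • (aD * bD) := by rw [s4, inv_smul_smul₀ hl]
  obtain ⟨ha1, ha2, ka, ha3⟩ := haD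
  obtain ⟨hb1, hb2, kb, hb3⟩ := hbD
  -- `a*aD` commutes with `b`
  have hpb : a * aD * b = b * (a * aD) := by
    calc a * aD * b = a * (aD * b) := mul_assoc _ _ _
    _ = l⁻¹ • (a * (b * aD)) := by rw [s1, mul_smul_comm]
    _ = l⁻¹ • (a * b * aD) := by rw [mul_assoc]
    _ = b * a * aD := by rw [h, smul_mul_assoc, inv_smul_smul₀ hl]
    _ = b * (a * aD) := mul_assoc _ _ _
  -- `b*bD` commutes with `a`
  have hqa : b * bD * a = a * (b * bD) := by
    calc b * bD * a = b * (bD * a) := mul_assoc _ _ _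
    _ = l • (b * (a * bD)) := by rw [s2, mul_smul_comm]
    _ = l • (b * a * bD) := by rw [mul_assoc]
    _ = a * b * bD := by rw [hba, smul_mul_assoc, smul_inv_smul₀ hl]
    _ = a * (b * bD) := mul_assoc _ _ _
  -- cA : (a*b)*(bD*aD) = (bD*b)*(a*aD)
  have cA : a * b * (bD * aD) = bD * b * (a * aD) := by
    rw [mul_assoc a b (bD * aD), ← mul_assoc b bD aD, ← mul_assoc a (b * bD) aD,
      ← hqa, hb2, mul_assoc (bD * b) a aD]
  -- cB : (bD*aD)*(a*b) = (bD*b)*(a*aD)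
  have cB : bD * aD * (a * b) = bD * b * (a * aD) := by
    rw [mul_assoc bD aD (a * b), ← mul_assoc aD a b, ← ha2, hpb, ← mul_assoc]
  have cond2 : a * b * (bD * aD) = bD * aD * (a * b) := cA.trans cB.symm
  -- `bD` commutes with `a*aD`
  have hpbD : a * aD * bD = bD * (a * aD) := by
    calc a * aD * bD = a * (aD * bD) := mul_assoc _ _ _
    _ = l • (a * (bD * aD)) := by rw [s4, mul_smul_comm]
    _ = l • (a * bD * aD) := by rw [mul_assoc]
    _ = bD * a * aD := by rw [s3, smul_mul_assoc, smul_inv_smul₀ hl]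
    _ = bD * (a * aD) := mul_assoc _ _ _
  have cond1 : bD * aD * (a * b) * (bD * aD) = bD * aD := by
    calc bD * aD * (a * b) * (bD * aD) = bD * b * (a * aD) * (bD * aD) := by rw [cB]
    _ = bD * b * (a * aD * bD * aD) := by
        rw [mul_assoc (bD * b) (a * aD) (bD * aD), ← mul_assoc (a * aD) bD aD]
    _ = bD * b * (bD * (a * aD * aD)) := by rw [hpbD, mul_assoc bD (a * aD) aD]
    _ = bD * b * bD * (a * aD * aD) := by rw [← mul_assoc]
    _ = bD * aD := by rw [hb1, ha2, mul_assoc aD a aD, ← mul_assoc aD a aD, ha1]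
  -- condition 3 with n = ka + kb
  have ha3' : a ^ (ka + kb + 1) * aD = a ^ (ka + kb) := aux_nil a aD ka ha3 kb
  have hb3' : b ^ (ka + kb + 1) * bD = b ^ (ka + kb) := by
    have := aux_nil b bD kb hb3 ka
    rwa [Nat.add_comm kb ka] at this
  obtain ⟨μ, hμ, hμeq⟩ := aux_prod_pow a b l hl hba (ka + kb)
  set n := ka + kb with hn
  have hc2 : Commute (a * aD) b := hpb
  have hcomm : b ^ n * (a * aD) = a * aD * b ^ n := (hc2.symm.pow_left n).eq
  have cond3 : (a * b) ^ (n + 1) * (bD * aD) = (a * b) ^ n := by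
    calc (a * b) ^ (n + 1) * (bD * aD)
        = (a * b) ^ n * (a * b * (bD * aD)) := by rw [pow_succ, mul_assoc]
    _ = (a * b) ^ n * (b * bD * (a * aD)) := by rw [cA, hb2, mul_assoc]
    _ = μ • (a ^ n * (b ^ n * (b * bD)) * (a * aD)) := by
        rw [hμeq, smul_mul_assoc, ← mul_assoc (a ^ n * b ^ n) (b * bD) (a * aD),
          mul_assoc (a ^ n) (b ^ n) (b * bD)]
    _ = μ • (a ^ n * b ^ n * (a * aD)) := by
        rw [← mul_assoc (b ^ n) b bD, ← pow_succ, hb3', mul_assoc]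
    _ = μ • (a ^ n * (a * aD) * b ^ n) := by
        rw [mul_assoc (a ^ n) (b ^ n) (a * aD), hcomm, ← mul_assoc]
    _ = μ • (a ^ n * b ^ n) := by rw [← mul_assoc (a ^ n) a aD, ← pow_succ, ha3']
    _ = (a * b) ^ n := hμeq.symm
  exact ⟨⟨cond1, cond2, n, cond3⟩, second⟩
end

section
/- If a and b are Drazin invertible with ab = λba (λ ≠ 0), then a·a^D commutes with b, and a·b^D·b = b^D·b·a (i.e. a commutes with the spectral idempotents b·b^D and a·a^D commutes with b and b^D). -/
lemma spectral_comm {F A : Type*} [Field F] [Ring A] [Algebra F A]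
    (a aD b : A) (haD : IsDrazinInverse a aD)
    (l : F) (hl : l ≠ 0) (h : a * b = l • (b * a)) :
    (a * aD) * b = b * (a * aD) := by
  obtain ⟨h1, h2, k, h3⟩ := haD
  have c : Commute a aD := h2
  have hpp : IsIdempotentElem (a * aD) := by
    show a * aD * (a * aD) = a * aD
    calc a * aD * (a * aD) = a * (aD * a * aD) := by noncomm_ring
      _ = a * aD := by rw [h1]
  set m := k + 1 with hm
  have hmm : a ^ m * aD ^ m = a * aD := by rw [← c.mul_pow, hm, hpp.pow_succ_eq]
  have hmm' : aD ^ m * a ^ m = a * aD := by rw [← (c.pow_pow m m).eq]; exact hmm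
  have hcap : Commute a (a * aD) := (Commute.refl a).mul_right c
  have hampm : a ^ m * (a * aD) = a ^ m := by
    rw [← mul_assoc, ← pow_succ, pow_succ' a m, mul_assoc, h3, ← pow_succ', hm]
  have hpam : (a * aD) * a ^ m = a ^ m := by
    rw [← (hcap.pow_left m).eq]; exact hampm
  have hpow : ∀ n : ℕ, a ^ n * b = (l ^ n) • (b * a ^ n) := by
    intro n
    induction n with
    | zero => simp
    | succ n ih =>
      rw [pow_succ a n, mul_assoc, h, mul_smul_comm, ← mul_assoc, ih, smul_mul_assoc,
        smul_smul, ← pow_succ', mul_assoc]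
  have hlm : (l ^ m) ≠ 0 := pow_ne_zero _ hl
  have hpow' : b * a ^ m = (l ^ m)⁻¹ • (a ^ m * b) := by
    rw [hpow m, smul_smul, inv_mul_cancel₀ hlm, one_smul]
  have E1 : (a * aD) * b = l ^ m • (aD ^ m * (b * a ^ m)) := by
    rw [← hmm', mul_assoc, hpow m, mul_smul_comm]
  have E1' : (a * aD) * b * (a * aD) = l ^ m • (aD ^ m * (b * a ^ m)) := by
    rw [E1, smul_mul_assoc, mul_assoc, mul_assoc, hampm]
  have E2 : b * (a * aD) = (l ^ m)⁻¹ • (a ^ m * b * aD ^ m) := by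
    rw [← hmm, ← mul_assoc, hpow', smul_mul_assoc]
  have E2' : (a * aD) * (b * (a * aD)) = (l ^ m)⁻¹ • (a ^ m * b * aD ^ m) := by
    rw [E2, mul_smul_comm, ← mul_assoc, ← mul_assoc, hpam]
  rw [E1, ← E1', mul_assoc, E2', E2]

theorem stmt4 {F A : Type*} [Field F] [Ring A] [Algebra F A]
    (a aD b bD : A) (haD : IsDrazinInverse a aD) (hbD : IsDrazinInverse b bD)
    (l : F) (hl : l ≠ 0) (h : a * b = l • (b * a)) :
    (a * aD) * b = b * (a * aD) ∧ (a * aD) * bD = bD * (a * aD) ∧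
    a * (bD * b) = (bD * b) * a := by
  have part1 := spectral_comm a aD b haD l hl h
  have h' : b * a = l⁻¹ • (a * b) := by
    rw [h, smul_smul, inv_mul_cancel₀ hl, one_smul]
  have part3' := spectral_comm b bD a hbD l⁻¹ (inv_ne_zero hl) h'
  have hb1 := hbD.1
  have hb2 := hbD.2.1
  have hpe : (a * aD) * (b * bD) = (b * bD) * (a * aD) :=
    spectral_comm a aD (b * bD) haD (1 : F) one_ne_zero (by rw [one_smul]; exact part3'.symm)
  refine ⟨part1, ?_, ?_⟩
  · -- p = a*aD commutes with bD
    have hee : (b * bD) * (b * bD) = b * bD := by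
      rw [mul_assoc, ← mul_assoc bD b bD, hb1]
    have hebD : (b * bD) * bD = bD := by rw [hb2, hb1]
    have hbDe : bD * (b * bD) = bD := by rw [← mul_assoc, hb1]
    have hbe : b * (b * bD) = (b * bD) * b := by
      calc b * (b * bD) = b * (bD * b) := by rw [hb2]
        _ = (b * bD) * b := by rw [← mul_assoc]
    set u := b * (b * bD) + 1 - (b * bD) with hu
    set v := bD + 1 - (b * bD) with hv
    have k1 : b * (b * bD) * bD = b * bD := by rw [mul_assoc, hebD]
    have k2 : b * (b * bD) * (b * bD) = b * (b * bD) := by rw [mul_assoc, hee]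
    have k3 : bD * (b * (b * bD)) = b * bD := by rw [← mul_assoc, ← hb2, hee]
    have k4 : (b * bD) * (b * (b * bD)) = b * (b * bD) := by
      rw [hbe, ← mul_assoc, hee]
    have huv : u * v = 1 := by
      rw [hu, hv]
      simp only [add_mul, sub_mul, mul_add, mul_sub, mul_one, one_mul]
      rw [k1, k2, hebD, hee]
      abel
    have hvu : v * u = 1 := by
      rw [hu, hv]
      simp only [add_mul, sub_mul, mul_add, mul_sub, mul_one, one_mul]
      rw [k3, k4, hbDe, hee]
      abel
    have k5 : (a * aD) * (b * (b * bD)) = (b * (b * bD)) * (a * aD) := by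
      rw [← mul_assoc, part1, mul_assoc, hpe, ← mul_assoc]
    have hpu : (a * aD) * u = u * (a * aD) := by
      rw [hu]
      simp only [mul_add, add_mul, mul_sub, sub_mul, mul_one, one_mul]
      rw [k5, hpe]
    have hA : u * ((a * aD) * v) = (a * aD) := by
      rw [← mul_assoc, ← hpu, mul_assoc, huv, mul_one]
    have hB : v * (u * ((a * aD) * v)) = (a * aD) * v := by
      rw [← mul_assoc, hvu, one_mul]
    have hpv : (a * aD) * v = v * (a * aD) := by
      rw [← hB, hA]
    have hbDv : v * (b * bD) = bD := by
      rw [hv]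
      simp only [add_mul, sub_mul, one_mul]
      rw [hbDe, hee]
      abel
    calc (a * aD) * bD = (a * aD) * (v * (b * bD)) := by rw [hbDv]
      _ = ((a * aD) * v) * (b * bD) := by rw [← mul_assoc]
      _ = (v * (a * aD)) * (b * bD) := by rw [hpv]
      _ = v * ((a * aD) * (b * bD)) := by rw [mul_assoc]
      _ = v * ((b * bD) * (a * aD)) := by rw [hpe]
      _ = (v * (b * bD)) * (a * aD) := by rw [← mul_assoc]
      _ = bD * (a * aD) := by rw [hbDv]
  · rw [← hb2]
    exact part3'.symm
end

section
/- Suppose a and b are Drazin invertible with ab = λba, λ ≠ 0, and let t = ind(b). Then 1 − b·b^π·a^D is invertible with inverse 1 + b·a^D·b^π + (b·a^D)²·b^π + ⋯ + (b·a^D)^(t−1)·b^π, where b^π = 1 − b·b^D. -/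
theorem one_sub_mul_inverse_of_pow_mul_eq_zero {R : Type*} [Ring R] {x p : R} {t : ℕ}
    (hp : IsIdempotentElem p) (hxp : Commute x p) (ht : x ^ t * p = 0) :
    (1 - x * p) * (1 + ∑ i ∈ Finset.Ico 1 t, x ^ i * p) = 1 ∧
    (1 + ∑ i ∈ Finset.Ico 1 t, x ^ i * p) * (1 - x * p) = 1 := by
  rcases t.eq_zero_or_pos with rfl | ht0
  · have hp0 : p = 0 := by simpa using ht
    simp [hp0]
  have hpow : ∀ i, 0 < i → x ^ i * p = (x * p) ^ i := fun i hi => by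
    rw [hxp.mul_pow, hp.pow_eq hi.ne']
  have hsum : 1 + ∑ i ∈ Finset.Ico 1 t, x ^ i * p = ∑ i ∈ Finset.range t, (x * p) ^ i := by
    rw [Finset.sum_range_eq_add_Ico _ ht0, pow_zero]
    exact congrArg _ (Finset.sum_congr rfl fun i hi => hpow i (Finset.mem_Ico.1 hi).1)
  rw [hsum, mul_neg_geom_sum, geom_sum_mul_neg, ← hpow t ht0, ht, sub_zero]
  exact ⟨rfl, rfl⟩

section SkewCommuting

variable {F A : Type*} [Field F] [Ring A] [Algebra F A]

theorem mul_pow_eq_smul_pow_mul {x a : A} {μ : F} (h : x * a = μ • (a * x)) (n : ℕ) :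
    x * a ^ n = μ ^ n • (a ^ n * x) := by
  induction n with
  | zero => simp
  | succ n ih =>
    rw [pow_succ, ← mul_assoc, ih, smul_mul_assoc, mul_assoc, h, mul_smul_comm, smul_smul,
      ← mul_assoc, ← pow_succ, ← pow_succ]

theorem mul_pow_eq_smul_pow_mul_pow {x a : A} {μ : F} (h : x * a = μ • (a * x)) (n : ℕ) :
    (a * x) ^ n = μ ^ n.choose 2 • (a ^ n * x ^ n) := by
  induction n with
  | zero => simp
  | succ n ih =>
    have hchoose : (n + 1).choose 2 = n.choose 2 + n := by
      rw [Nat.choose_succ_succ, Nat.choose_one_right, add_comm]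
    calc (a * x) ^ (n + 1) = μ ^ n.choose 2 • (a * (x * a ^ n) * x ^ n) := by
          rw [pow_succ', ih, mul_smul_comm]; simp only [mul_assoc]
      _ = (μ ^ n.choose 2 * μ ^ n) • (a * a ^ n * (x * x ^ n)) := by
          rw [mul_pow_eq_smul_pow_mul h]
          simp only [smul_mul_assoc, mul_smul_comm, mul_assoc, smul_smul]
      _ = μ ^ (n + 1).choose 2 • (a ^ (n + 1) * x ^ (n + 1)) := by
          rw [← pow_add, ← pow_succ', ← pow_succ', hchoose]

theorem commute_mul_of_mul_eq_smul_mul {c x y : A} {μ ν : F} (hx : c * x = μ • (x * c))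
    (hy : c * y = ν • (y * c)) (hμν : μ * ν = 1) : Commute c (x * y) := by
  rw [Commute, SemiconjBy, ← mul_assoc, hx, smul_mul_assoc, mul_assoc, hy, mul_smul_comm,
    smul_smul, hμν, one_smul, mul_assoc]

end SkewCommuting

namespace IsDrazinInverse

variable {A : Type*} [Ring A] {a c : A}

theorem commute (h : IsDrazinInverse a c) : Commute a c := h.2.1

theorem isIdempotentElem_mul (h : IsDrazinInverse a c) : IsIdempotentElem (a * c) := by
  rw [IsIdempotentElem, mul_assoc, ← mul_assoc c, h.1]

theorem pow_succ_mul_pow (h : IsDrazinInverse a c) (n : ℕ) : c ^ (n + 1) * a ^ n = c := by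
  induction n with
  | zero => simp
  | succ n ih =>
    have hca : Commute (c * a) (a ^ n) := (h.commute.symm.mul_left (.refl a)).pow_right n
    calc c ^ (n + 1 + 1) * a ^ (n + 1) = c ^ (n + 1) * a ^ n * (c * a) := by
          rw [pow_succ c, pow_succ' a, mul_assoc, ← mul_assoc c, hca.eq, mul_assoc]
      _ = c := by rw [ih, ← h.commute.eq, ← mul_assoc, h.1]

theorem pow_mul_pow_succ (h : IsDrazinInverse a c) (n : ℕ) : a ^ n * c ^ (n + 1) = c :=
  ((h.commute.pow_pow n (n + 1)).eq).trans (h.pow_succ_mul_pow n)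

variable {F : Type*} [Field F] [Algebra F A]

theorem mul_eq_smul_mul {x : A} {μ : F} (h : IsDrazinInverse a c) (hμ : μ ≠ 0)
    (hx : x * a = μ • (a * x)) : c * x = μ • (x * c) := by
  obtain ⟨k, hk⟩ := h.2.2
  have hxk := mul_pow_eq_smul_pow_mul hx k
  have hak : a * c * a ^ k = a ^ k := by
    rw [mul_assoc, ← (h.commute.pow_left k).eq, ← mul_assoc, ← pow_succ', hk]
  have hproj : x * c = a * c * (x * c) := by
    calc x * c = x * (a ^ k * c ^ (k + 1)) := by rw [h.pow_mul_pow_succ]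
      _ = μ ^ k • (a * c * a ^ k * x * c ^ (k + 1)) := by
          rw [← mul_assoc, hxk, smul_mul_assoc, hak]
      _ = a * c * (x * a ^ k * c ^ (k + 1)) := by
          rw [hxk]; simp only [smul_mul_assoc, mul_smul_comm, mul_assoc]
      _ = a * c * (x * c) := by rw [mul_assoc x, h.pow_mul_pow_succ]
  have hscaled : μ ^ k • (c * x) = μ ^ k • (μ • (c * a * (x * c))) := by
    calc μ ^ k • (c * x) = μ ^ k • (c ^ (k + 1) * a ^ k * x) := by rw [h.pow_succ_mul_pow]
      _ = c ^ (k + 1) * (x * a ^ (k + 1) * c) := by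
          rw [mul_assoc x, hk, hxk]; simp only [mul_smul_comm, mul_assoc]
      _ = μ ^ (k + 1) • (c ^ (k + 1) * a ^ k * a * (x * c)) := by
          rw [mul_pow_eq_smul_pow_mul hx, pow_succ a]
          simp only [smul_mul_assoc, mul_smul_comm, mul_assoc]
      _ = μ ^ k • (μ • (c * a * (x * c))) := by rw [h.pow_succ_mul_pow, pow_succ, mul_smul]
  rw [smul_right_injective A (pow_ne_zero k hμ) hscaled, ← h.commute.eq, ← hproj]

end IsDrazinInverse

theorem stmt5_general {F A : Type*} [Field F] [Ring A] [Algebra F A]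
    (a aD b bD : A) (haD : IsDrazinInverse a aD) (hbD : IsDrazinInverse b bD)
    (l : F) (hl : l ≠ 0) (h : a * b = l • (b * a))
    (t : ℕ) (ht : b ^ (t + 1) * bD = b ^ t) :
    (1 - b * (1 - b * bD) * aD) *
        (1 + ∑ i ∈ Finset.Ico 1 t, (b * aD) ^ i * (1 - b * bD)) = 1 ∧
    (1 + ∑ i ∈ Finset.Ico 1 t, (b * aD) ^ i * (1 - b * bD)) *
        (1 - b * (1 - b * bD) * aD) = 1 := by
  set π := 1 - b * bD
  have hπ : IsIdempotentElem π := hbD.isIdempotentElem_mul.one_sub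
  have hbtπ : b ^ t * π = 0 := by
    rw [mul_sub, mul_one, ← mul_assoc, ← pow_succ, ht, sub_self]
  have haDb : aD * b = l⁻¹ • (b * aD) :=
    haD.mul_eq_smul_mul (inv_ne_zero hl) (by rw [h, inv_smul_smul₀ hl])
  have haDbD : aD * bD = l • (bD * aD) := haD.mul_eq_smul_mul hl (hbD.mul_eq_smul_mul hl h)
  have hπaD : Commute π aD := (Commute.one_left aD).sub_left
    (commute_mul_of_mul_eq_smul_mul haDb haDbD (inv_mul_cancel₀ hl)).symm
  have hπb : Commute π b :=
    (Commute.one_left b).sub_left ((Commute.refl b).mul_left hbD.commute.symm)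
  have hXtπ : (b * aD) ^ t * π = 0 := by
    rw [mul_pow_eq_smul_pow_mul_pow haDb, smul_mul_assoc, mul_assoc, ← (hπaD.pow_right t).eq,
      ← mul_assoc, hbtπ, zero_mul, smul_zero]
  rw [mul_assoc b, hπaD.eq, ← mul_assoc]
  exact one_sub_mul_inverse_of_pow_mul_eq_zero hπ (hπb.mul_right hπaD).symm hXtπ

theorem stmt5 {F A : Type*} [Field F] [Ring A] [Algebra F A]
    (a aD b bD : A) (haD : IsDrazinInverse a aD) (hbD : IsDrazinInverse b bD)
    (l : F) (hl : l ≠ 0) (h : a * b = l • (b * a))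
    (t : ℕ) (ht : b ^ (t + 1) * bD = b ^ t)
    (htmin : ∀ k < t, b ^ (k + 1) * bD ≠ b ^ k) :
    (1 - b * (1 - b * bD) * aD) *
        (1 + ∑ i ∈ Finset.Ico 1 t, (b * aD) ^ i * (1 - b * bD)) = 1 ∧
    (1 + ∑ i ∈ Finset.Ico 1 t, (b * aD) ^ i * (1 - b * bD)) *
        (1 - b * (1 - b * bD) * aD) = 1 :=
  stmt5_general a aD b bD haD hbD l hl h t ht
end

section
/- If a, b are elements of a ring with a³b = ba and b³a = ab, then for every positive integer i, ab = a^(26i)·(ab)·b^(2i) and ba = b^(26i)·(ba)·a^(2i). -/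
theorem aux_pow {R : Type*} [Ring R] (a b : R)
    (h1 : a ^ 3 * b = b * a) : ∀ n : ℕ, b * a ^ n = a ^ (3 * n) * b := by
  intro n
  induction n with
  | zero => simp
  | succ n ih =>
    have : b * a ^ (n + 1) = (b * a ^ n) * a := by rw [pow_succ, mul_assoc]
    rw [this, ih, mul_assoc, ← h1, ← mul_assoc, ← pow_add]
    ring_nf

theorem aux_key {R : Type*} [Ring R] (a b : R)
    (h1 : a ^ 3 * b = b * a) (h2 : b ^ 3 * a = a * b) :
    a * b = a ^ 26 * (a * b) * b ^ 2 := by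
  have k := aux_pow a b h1
  have e1 : a * b = b ^ 2 * (a ^ 3 * b) := by
    rw [h1]
    calc a * b = b ^ 3 * a := h2.symm
      _ = b ^ 2 * (b * a) := by rw [pow_succ, mul_assoc]
  have e2 : b ^ 2 * a ^ 3 = a ^ 27 * b ^ 2 := by
    calc b ^ 2 * a ^ 3 = b * (b * a ^ 3) := by rw [pow_two, mul_assoc]
      _ = b * (a ^ 9 * b) := by rw [k 3]
      _ = (b * a ^ 9) * b := by rw [mul_assoc]
      _ = a ^ 27 * b * b := by rw [k 9]
      _ = a ^ 27 * b ^ 2 := by rw [mul_assoc, ← pow_two]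
  calc a * b = b ^ 2 * (a ^ 3 * b) := e1
    _ = (b ^ 2 * a ^ 3) * b := by rw [mul_assoc]
    _ = a ^ 27 * b ^ 2 * b := by rw [e2]
    _ = a ^ 26 * (a * b) * b ^ 2 := by
        rw [show (27:ℕ) = 26 + 1 from rfl, pow_add, pow_one]
        simp only [mul_assoc]
        congr 2
        rw [← pow_succ, pow_succ']

theorem stmt10 {R : Type*} [Ring R] (a b : R)
    (h1 : a ^ 3 * b = b * a) (h2 : b ^ 3 * a = a * b) :
    ∀ i : ℕ, 0 < i →
      a * b = a ^ (26 * i) * (a * b) * b ^ (2 * i) ∧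
      b * a = b ^ (26 * i) * (b * a) * a ^ (2 * i) := by
  have key1 := aux_key a b h1 h2
  have key2 := aux_key b a h2 h1
  have main : ∀ (x y : R), x * y = x ^ 26 * (x * y) * y ^ 2 →
      ∀ i : ℕ, x * y = x ^ (26 * i) * (x * y) * y ^ (2 * i) := by
    intro x y key i
    induction i with
    | zero => simp
    | succ n ih =>
      rw [mul_add, mul_add, pow_add, pow_add]
      calc x * y = x ^ (26 * n) * (x * y) * y ^ (2 * n) := ih
        _ = x ^ (26 * n) * (x ^ 26 * (x * y) * y ^ 2) * y ^ (2 * n) := by rw [← key]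
        _ = x ^ (26 * n) * x ^ 26 * (x * y) * (y ^ 2 * y ^ (2 * n)) := by
            simp [mul_assoc]
        _ = x ^ (26 * n) * x ^ 26 * (x * y) * (y ^ (2 * n) * y ^ 2) := by
            rw [show y ^ 2 * y ^ (2 * n) = y ^ (2 * n) * y ^ 2 from by rw [← pow_add, ← pow_add, Nat.add_comm]]
  intro i _
  exact ⟨main a b key1 i, main b a key2 i⟩
end
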